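/- Let H1, H2 ∈ (0,1) and let t, t', s, s' > 0 with t ≠ t' and s ≠ s'. Then (1/4)·( t^{2H1} + t'^{2H1} − |t − t'|^{2H1} + s^{2H2} + s'^{2H2} − |s − s'|^{2H2} )² < (t^{2H1} + s^{2H2})·(t'^{2H1} + s'^{2H2}). -/

import Mathlib

/-!
Write `a = t ^ H₁`, `a' = t' ^ H₁`, `b = s ^ H₂`, `b' = s' ^ H₂`. Strict subadditivity of
`u ↦ u ^ H` for `H < 1` gives `|t ^ H - t' ^ H| < |t - t'| ^ H < t ^ H + t' ^ H`, which after
squaring says that the fBm covariance satisfies `|R_H(t, t')| < t ^ H * t' ^ H`.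
Hence the left-hand side is `(R_{H₁}(t, t') + R_{H₂}(s, s'))² < (a a' + b b')²`, and the
Cauchy–Schwarz inequality `(a a' + b b')² ≤ (a² + b²)(a'² + b'²)` finishes.
-/

open Real Set

namespace Real

lemma rpow_two_mul {x : ℝ} (hx : 0 ≤ x) (p : ℝ) : x ^ (2 * p) = (x ^ p) ^ 2 := by
  rw [mul_comm]
  exact_mod_cast rpow_mul_natCast hx p 2

lemma rpow_add_lt_add_rpow {p u v : ℝ} (hu : 0 < u) (hv : 0 < v) (hp : p < 1) :
    (u + v) ^ p < u ^ p + v ^ p := by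
  have hw : 0 < u + v := add_pos hu hv
  -- `u / (u + v)` and `v / (u + v)` sum to `1` and each lies below its `p`-th power.
  have hfrac : ∀ x, 0 < x → x < u + v → x / (u + v) < x ^ p / (u + v) ^ p := fun x hx hxw => by
    rw [← div_rpow hx.le hw.le]
    exact self_lt_rpow_of_lt_one (div_pos hx hw) ((div_lt_one hw).2 hxw) hp
  have hsum := add_lt_add (hfrac u hu (by linarith)) (hfrac v hv (by linarith))
  rwa [← add_div, ← add_div, div_self hw.ne',
    one_lt_div (rpow_pos_of_pos hw p)] at hsum

lemma abs_rpow_sub_rpow_lt_abs_sub_rpow {p x y : ℝ} (hx : 0 < x) (hy : 0 < y) (hxy : x ≠ y)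
    (hp₀ : 0 ≤ p) (hp₁ : p < 1) : |x ^ p - y ^ p| < |x - y| ^ p := by
  wlog hlt : x < y generalizing x y
  · rw [abs_sub_comm, abs_sub_comm x]
    exact this hy hx hxy.symm (lt_of_le_of_ne (not_lt.1 hlt) hxy.symm)
  have hpow : y ^ p < x ^ p + (y - x) ^ p := by
    simpa using rpow_add_lt_add_rpow hx (sub_pos.2 hlt) hp₁
  rw [abs_sub_comm x, abs_of_pos (sub_pos.2 hlt),
    abs_of_nonpos (sub_nonpos.2 (rpow_le_rpow hx.le hlt.le hp₀))]
  linarith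

lemma abs_sub_rpow_lt_rpow_add_rpow {p x y : ℝ} (hx : 0 < x) (hy : 0 < y) (hp : 0 < p) :
    |x - y| ^ p < x ^ p + y ^ p := by
  rcases le_total x y with hxy | hyx
  · have : |x - y| ^ p < y ^ p :=
      rpow_lt_rpow (abs_nonneg _) (by rw [abs_sub_comm, abs_of_nonneg (by linarith)]; linarith) hp
    linarith [rpow_pos_of_pos hx p]
  · have : |x - y| ^ p < x ^ p :=
      rpow_lt_rpow (abs_nonneg _) (by rw [abs_of_nonneg (by linarith)]; linarith) hp
    linarith [rpow_pos_of_pos hy p]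

end Real

noncomputable def fbmCovariance (H t t' : ℝ) : ℝ :=
  (t ^ (2 * H) + t' ^ (2 * H) - |t - t'| ^ (2 * H)) / 2

lemma abs_fbmCovariance_lt {H t t' : ℝ} (hH : H ∈ Ioo 0 1) (ht : 0 < t) (ht' : 0 < t')
    (htt' : t ≠ t') : |fbmCovariance H t t'| < t ^ H * t' ^ H := by
  have hlow := abs_rpow_sub_rpow_lt_abs_sub_rpow ht ht' htt' hH.1.le hH.2
  have hup := abs_sub_rpow_lt_rpow_add_rpow ht ht' hH.1
  have hsq_low : (t ^ H - t' ^ H) ^ 2 < (|t - t'| ^ H) ^ 2 := by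
    rw [← sq_abs]; exact pow_lt_pow_left₀ hlow (abs_nonneg _) two_ne_zero
  have hsq_up : (|t - t'| ^ H) ^ 2 < (t ^ H + t' ^ H) ^ 2 :=
    pow_lt_pow_left₀ hup (rpow_nonneg (abs_nonneg _) H) two_ne_zero
  rw [fbmCovariance, rpow_two_mul ht.le, rpow_two_mul ht'.le, rpow_two_mul (abs_nonneg _),
    abs_lt]
  constructor <;> linarith

lemma sq_add_lt_mul_of_abs_lt {x y a a' b b' : ℝ} (hx : |x| < a * a') (hy : |y| < b * b') :
    (x + y) ^ 2 < (a ^ 2 + b ^ 2) * (a' ^ 2 + b' ^ 2) :=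
  calc (x + y) ^ 2 = |x + y| ^ 2 := (sq_abs _).symm
    _ < (a * a' + b * b') ^ 2 :=
      pow_lt_pow_left₀ ((abs_add_le x y).trans_lt (add_lt_add hx hy)) (abs_nonneg _) two_ne_zero
    _ ≤ (a ^ 2 + b ^ 2) * (a' ^ 2 + b' ^ 2) := by nlinarith [sq_nonneg (a * b' - a' * b)]

/-- For `H1, H2 ∈ (0,1)` and `t, t', s, s' > 0` with `t ≠ t'`, `s ≠ s'`,
`(1/4)(t^{2H1} + t'^{2H1} - |t-t'|^{2H1} + s^{2H2} + s'^{2H2} - |s-s'|^{2H2})²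
  < (t^{2H1} + s^{2H2})(t'^{2H1} + s'^{2H2})`. -/
theorem covariance_bound (H1 H2 : ℝ) (h1 : H1 ∈ Set.Ioo (0:ℝ) 1)
    (h2 : H2 ∈ Set.Ioo (0:ℝ) 1)
    (t t' s s' : ℝ) (ht : 0 < t) (ht' : 0 < t') (hs : 0 < s) (hs' : 0 < s')
    (htt : t ≠ t') (hss : s ≠ s') :
    1/4 * (t ^ (2 * H1) + t' ^ (2 * H1) - |t - t'| ^ (2 * H1) +
            s ^ (2 * H2) + s' ^ (2 * H2) - |s - s'| ^ (2 * H2)) ^ 2 <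
      (t ^ (2 * H1) + s ^ (2 * H2)) * (t' ^ (2 * H1) + s' ^ (2 * H2)) := by
  calc 1/4 * (t ^ (2 * H1) + t' ^ (2 * H1) - |t - t'| ^ (2 * H1) +
          s ^ (2 * H2) + s' ^ (2 * H2) - |s - s'| ^ (2 * H2)) ^ 2
        = (fbmCovariance H1 t t' + fbmCovariance H2 s s') ^ 2 := by
          simp only [fbmCovariance]; ring
    _ < ((t ^ H1) ^ 2 + (s ^ H2) ^ 2) * ((t' ^ H1) ^ 2 + (s' ^ H2) ^ 2) :=
      sq_add_lt_mul_of_abs_lt (abs_fbmCovariance_lt h1 ht ht' htt)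
        (abs_fbmCovariance_lt h2 hs hs' hss)
    _ = (t ^ (2 * H1) + s ^ (2 * H2)) * (t' ^ (2 * H1) + s' ^ (2 * H2)) := by
      rw [rpow_two_mul ht.le, rpow_two_mul hs.le, rpow_two_mul ht'.le, rpow_two_mul hs'.le]
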